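/- Let n ≥ 1, let U ⊆ ℝⁿ be open and let u : U → ℝ be a C³ function satisfying Δu = −1 on U. Then the Weinberger P-function P = |∇u|² + (2/n)·u satisfies ΔP = 2·‖Hess u + (1/n)·Iₙ‖_F² at every point of U; in particular ΔP ≥ 0, i.e. P is subharmonic on U. -/

import Mathlib

open scoped BigOperators

/-- Partial derivative `∂ᵢ v` of a scalar function on `ℝⁿ = Fin n → ℝ`. -/
noncomputable def pd {n : ℕ} (i : Fin n) (v : (Fin n → ℝ) → ℝ) (x : Fin n → ℝ) : ℝ :=
  fderiv ℝ v x (Pi.single i 1)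

/-- Gradient `∇v`. -/
noncomputable def grad {n : ℕ} (v : (Fin n → ℝ) → ℝ) (x : Fin n → ℝ) : Fin n → ℝ :=
  fun i => pd i v x

/-- Hessian matrix `(∂ᵢ∂ⱼ v)ᵢⱼ`. -/
noncomputable def hess {n : ℕ} (v : (Fin n → ℝ) → ℝ) (x : Fin n → ℝ) :
    Matrix (Fin n) (Fin n) ℝ :=
  fun i j => pd i (fun y => pd j v y) x

/-- Laplacian `Δv = tr (Hess v)`. -/
noncomputable def lap {n : ℕ} (v : (Fin n → ℝ) → ℝ) (x : Fin n → ℝ) : ℝ :=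
  ∑ i, hess v x i i

/-- Divergence of a vector field. -/
noncomputable def divg {n : ℕ} (X : (Fin n → ℝ) → (Fin n → ℝ)) (x : Fin n → ℝ) : ℝ :=
  ∑ i, pd i (fun y => X y i) x

/-- Euclidean inner product. -/
def dotp {n : ℕ} (a b : Fin n → ℝ) : ℝ := ∑ i, a i * b i

/-- Frobenius inner product of matrices. -/
def frobInner {n : ℕ} (A B : Matrix (Fin n) (Fin n) ℝ) : ℝ := ∑ i, ∑ j, A i j * B i j

/-- Squared Frobenius norm of a matrix. -/
def frobSq {n : ℕ} (A : Matrix (Fin n) (Fin n) ℝ) : ℝ := ∑ i, ∑ j, (A i j) ^ 2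

/-! Bochner's formula in flat space, `Δ|∇u|² = 2‖Hess u‖² + 2⟨∇u, ∇Δu⟩`, is a direct computation
once third derivatives are commuted. Since `Δu` is constant the last term vanishes, so
`ΔP = 2‖Hess u‖² - 2/n`; expanding `‖Hess u + Iₙ/n‖²` with `tr Hess u = -1` gives the same value. -/

open Filter Topology

section PartialDerivatives

variable {n : ℕ} {x : Fin n → ℝ} {i : Fin n} {f g : (Fin n → ℝ) → ℝ}

lemma pd_congr_of_eventuallyEq (h : f =ᶠ[𝓝 x] g) : pd i f x = pd i g x := by
  rw [pd, pd, h.fderiv_eq]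

lemma pd_const (c : ℝ) : pd i (fun _ => c) x = 0 := by
  simp [pd]

lemma pd_add (hf : DifferentiableAt ℝ f x) (hg : DifferentiableAt ℝ g x) :
    pd i (fun y => f y + g y) x = pd i f x + pd i g x := by
  simp [pd, fderiv_fun_add hf hg]

lemma pd_const_mul (c : ℝ) (hf : DifferentiableAt ℝ f x) :
    pd i (fun y => c * f y) x = c * pd i f x := by
  simp [pd, fderiv_const_mul hf c]

lemma pd_mul (hf : DifferentiableAt ℝ f x) (hg : DifferentiableAt ℝ g x) :
    pd i (fun y => f y * g y) x = pd i f x * g x + f x * pd i g x := by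
  simp only [pd, fderiv_fun_mul hf hg, add_apply, smul_apply, smul_eq_mul]
  ring

lemma pd_sum {ι : Type*} (s : Finset ι) {F : ι → (Fin n → ℝ) → ℝ}
    (hF : ∀ j ∈ s, DifferentiableAt ℝ (F j) x) :
    pd i (fun y => ∑ j ∈ s, F j y) x = ∑ j ∈ s, pd i (F j) x := by
  simp [pd, fderiv_fun_sum hF]

lemma ContDiffAt.contDiffAt_pd {m k : WithTop ℕ∞} (hf : ContDiffAt ℝ k f x) (hmk : m + 1 ≤ k)
    (j : Fin n) :
    ContDiffAt ℝ m (pd j f) x :=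
  (hf.fderiv_right hmk).clm_apply contDiffAt_const

lemma ContDiffAt.eventually_differentiableAt {k : ℕ} (hf : ContDiffAt ℝ k f x) (hk : k ≠ 0) :
    ∀ᶠ y in 𝓝 x, DifferentiableAt ℝ f y :=
  (hf.eventually (by simp)).mono fun _ hy => hy.differentiableAt (by exact_mod_cast hk)

lemma ContDiffAt.differentiableAt_pd (hf : ContDiffAt ℝ 2 f x) (j : Fin n) :
    DifferentiableAt ℝ (pd j f) x :=
  (hf.contDiffAt_pd (m := 1) (by norm_num) j).differentiableAt one_ne_zero

lemma pd_pd_comm (hf : ContDiffAt ℝ 2 f x) (j : Fin n) :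
    pd i (pd j f) x = pd j (pd i f) x := by
  have hd : DifferentiableAt ℝ (fderiv ℝ f) x :=
    (hf.fderiv_right (m := 1) le_rfl).differentiableAt one_ne_zero
  have hsnd : ∀ a b : Fin n → ℝ,
      fderiv ℝ (fun y => fderiv ℝ f y b) x a = fderiv ℝ (fderiv ℝ f) x a b := fun a b => by
    simp [fderiv_clm_apply hd (differentiableAt_const b)]
  show fderiv ℝ (fun y => fderiv ℝ f y (Pi.single j 1)) x (Pi.single i 1)
    = fderiv ℝ (fun y => fderiv ℝ f y (Pi.single i 1)) x (Pi.single j 1)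
  rw [hsnd, hsnd, hf.isSymmSndFDerivAt (by simp)]

end PartialDerivatives

section Laplacian

variable {n : ℕ} {x : Fin n → ℝ} {f g u : (Fin n → ℝ) → ℝ}

lemma lap_add (hf : ContDiffAt ℝ 2 f x) (hg : ContDiffAt ℝ 2 g x) :
    lap (fun y => f y + g y) x = lap f x + lap g x := by
  simp only [lap, hess, ← Finset.sum_add_distrib]
  refine Finset.sum_congr rfl fun i _ => ?_
  have hpd : pd i (fun y => f y + g y) =ᶠ[𝓝 x] fun y => pd i f y + pd i g y := by
    filter_upwards [hf.eventually_differentiableAt two_ne_zero,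
      hg.eventually_differentiableAt two_ne_zero] with y hfy hgy using pd_add hfy hgy
  rw [pd_congr_of_eventuallyEq hpd, pd_add (hf.differentiableAt_pd i) (hg.differentiableAt_pd i)]

lemma lap_const_mul (c : ℝ) (hf : ContDiffAt ℝ 2 f x) :
    lap (fun y => c * f y) x = c * lap f x := by
  simp only [lap, hess, Finset.mul_sum]
  refine Finset.sum_congr rfl fun i _ => ?_
  have hpd : pd i (fun y => c * f y) =ᶠ[𝓝 x] fun y => c * pd i f y := by
    filter_upwards [hf.eventually_differentiableAt two_ne_zero] with y hfy
      using pd_const_mul c hfy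
  rw [pd_congr_of_eventuallyEq hpd, pd_const_mul c (hf.differentiableAt_pd i)]

end Laplacian

section Bochner

variable {n : ℕ} {x : Fin n → ℝ} {u : (Fin n → ℝ) → ℝ}

lemma pd_dotp_grad_self {i : Fin n} (hu : ∀ j, DifferentiableAt ℝ (pd j u) x) :
    pd i (fun y => dotp (grad u y) (grad u y)) x = 2 * ∑ j, pd j u x * pd i (pd j u) x := by
  simp only [dotp, grad]
  rw [pd_sum (F := fun j y => pd j u y * pd j u y) _ fun j _ => (hu j).mul (hu j),
    Finset.mul_sum]
  refine Finset.sum_congr rfl fun j _ => ?_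
  rw [pd_mul (hu j) (hu j)]
  ring

lemma sum_pd_pd_pd_eq_pd_lap (hu : ContDiffAt ℝ 3 u x) (j : Fin n) :
    ∑ i, pd i (pd i (pd j u)) x = pd j (lap u) x := by
  have hu' (i : Fin n) : ContDiffAt ℝ 2 (pd i u) x := hu.contDiffAt_pd (by norm_num) i
  have hcomm (i : Fin n) : pd i (pd j u) =ᶠ[𝓝 x] pd j (pd i u) := by
    filter_upwards [(hu.of_le (by norm_num) : ContDiffAt ℝ 2 u x).eventually (by simp)]
      with y hy using pd_pd_comm hy j
  calc ∑ i, pd i (pd i (pd j u)) x = ∑ i, pd j (pd i (pd i u)) x :=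
        Finset.sum_congr rfl fun i _ => by
          rw [pd_congr_of_eventuallyEq (hcomm i), pd_pd_comm (hu' i) j]
    _ = pd j (lap u) x := (pd_sum _ fun i _ => (hu' i).differentiableAt_pd i).symm

/-- Bochner's formula in flat space. -/
theorem lap_dotp_grad_self (hu : ContDiffAt ℝ 3 u x) :
    lap (fun y => dotp (grad u y) (grad u y)) x
      = 2 * frobSq (hess u x) + 2 * dotp (grad u x) (grad (lap u) x) := by
  have hu' (j : Fin n) : ContDiffAt ℝ 2 (pd j u) x := hu.contDiffAt_pd (by norm_num) j
  have hd (j : Fin n) : DifferentiableAt ℝ (pd j u) x := (hu' j).differentiableAt (by norm_num)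
  have hgrad (i : Fin n) : pd i (fun y => dotp (grad u y) (grad u y))
      =ᶠ[𝓝 x] fun y => 2 * ∑ j, pd j u y * pd i (pd j u) y := by
    filter_upwards [(hu.of_le (by norm_num) : ContDiffAt ℝ 2 u x).eventually (by simp)]
      with y hy using pd_dotp_grad_self fun j => hy.differentiableAt_pd j
  have hdiag (i : Fin n) : pd i (pd i fun y => dotp (grad u y) (grad u y)) x
      = 2 * ∑ j, (pd i (pd j u) x ^ 2 + pd j u x * pd i (pd i (pd j u)) x) := by
    have hdj (j : Fin n) : DifferentiableAt ℝ (fun y => pd j u y * pd i (pd j u) y) x :=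
      (hd j).mul ((hu' j).differentiableAt_pd i)
    rw [pd_congr_of_eventuallyEq (hgrad i), pd_const_mul _ (.fun_sum fun j _ => hdj j),
      pd_sum _ fun j _ => hdj j]
    congr 1
    refine Finset.sum_congr rfl fun j _ => ?_
    rw [pd_mul (hd j) ((hu' j).differentiableAt_pd i)]
    ring
  calc lap (fun y => dotp (grad u y) (grad u y)) x
      = ∑ i, 2 * ∑ j, (pd i (pd j u) x ^ 2 + pd j u x * pd i (pd i (pd j u)) x) :=
        Finset.sum_congr rfl fun i _ => hdiag i
    _ = 2 * (∑ i, ∑ j, pd i (pd j u) x ^ 2 + ∑ j, pd j u x * ∑ i, pd i (pd i (pd j u)) x) := by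
        rw [← Finset.mul_sum]
        simp only [Finset.sum_add_distrib, Finset.mul_sum]
        rw [Finset.sum_comm (f := fun i j => pd j u x * _)]
    _ = 2 * frobSq (hess u x) + 2 * dotp (grad u x) (grad (lap u) x) := by
        simp only [sum_pd_pd_pd_eq_pd_lap hu]
        exact mul_add _ _ _

end Bochner

section Frobenius

variable {n : ℕ}

lemma frobSq_nonneg (A : Matrix (Fin n) (Fin n) ℝ) : 0 ≤ frobSq A := by
  unfold frobSq
  positivity

lemma frobSq_add_smul_one (A : Matrix (Fin n) (Fin n) ℝ) (t : ℝ) :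
    frobSq (A + t • (1 : Matrix (Fin n) (Fin n) ℝ))
      = frobSq A + 2 * t * A.trace + n * t ^ 2 := by
  have hsq (a : ℝ) (p : Prop) [Decidable p] :
      (a + t * if p then 1 else 0) ^ 2 = a ^ 2 + if p then 2 * t * a + t ^ 2 else 0 := by
    split_ifs <;> ring
  simp only [frobSq, Matrix.add_apply, Matrix.smul_apply, Matrix.one_apply, smul_eq_mul, hsq,
    Finset.sum_add_distrib, Finset.sum_ite_eq, Finset.mem_univ, if_true]
  simp only [Finset.sum_const, Finset.card_univ, Fintype.card_fin, nsmul_eq_mul, Matrix.trace,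
    Matrix.diag_apply, Finset.mul_sum]
  ring

end Frobenius

theorem stmt2_general {n : ℕ} {U : Set (Fin n → ℝ)} (hU : IsOpen U)
    (u : (Fin n → ℝ) → ℝ) (hu : ContDiffOn ℝ 3 u U)
    (heq : ∀ x ∈ U, lap u x = -1)
    (P : (Fin n → ℝ) → ℝ)
    (hP : ∀ y, P y = dotp (grad u y) (grad u y) + (2 / (n : ℝ)) * u y) :
    ∀ x ∈ U,
      lap P x = 2 * frobSq (hess u x + (1 / (n : ℝ)) • (1 : Matrix (Fin n) (Fin n) ℝ))
      ∧ 0 ≤ lap P x := by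
  intro x hx
  have hu3 : ContDiffAt ℝ 3 u x := hu.contDiffAt (hU.mem_nhds hx)
  have hu2 : ContDiffAt ℝ 2 u x := hu3.of_le (by norm_num)
  have hgrad_lap : grad (lap u) x = 0 := funext fun j =>
    (pd_congr_of_eventuallyEq (eventually_of_mem (hU.mem_nhds hx) heq)).trans (pd_const _)
  have hlapP : lap P x = 2 * frobSq (hess u x) - 2 / n := by
    have hgrad_sq : ContDiffAt ℝ 2 (fun y => dotp (grad u y) (grad u y)) x :=
      .sum fun j _ => (hu3.contDiffAt_pd le_rfl j).mul (hu3.contDiffAt_pd le_rfl j)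
    rw [funext hP, lap_add hgrad_sq (contDiffAt_const.mul hu2), lap_const_mul _ hu2,
      lap_dotp_grad_self hu3, hgrad_lap, heq x hx]
    simp only [dotp, Pi.zero_apply, mul_zero, Finset.sum_const_zero, add_zero]
    ring
  have hkey : lap P x
      = 2 * frobSq (hess u x + (1 / (n : ℝ)) • (1 : Matrix (Fin n) (Fin n) ℝ)) := by
    have htrace : (hess u x).trace = -1 := heq x hx
    have hinv : (n : ℝ) * (1 / n) ^ 2 = 1 / n := by
      simpa [sq, mul_assoc] using inv_mul_mul_self (n : ℝ)⁻¹
    rw [hlapP, frobSq_add_smul_one, htrace, hinv]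
    ring
  exact ⟨hkey, hkey ▸ mul_nonneg two_pos.le (frobSq_nonneg _)⟩

theorem stmt2 {n : ℕ} (hn : 1 ≤ n) {U : Set (Fin n → ℝ)} (hU : IsOpen U)
    (u : (Fin n → ℝ) → ℝ) (hu : ContDiffOn ℝ 3 u U)
    (heq : ∀ x ∈ U, lap u x = -1)
    (P : (Fin n → ℝ) → ℝ)
    (hP : ∀ y, P y = dotp (grad u y) (grad u y) + (2 / (n : ℝ)) * u y) :
    ∀ x ∈ U,
      lap P x = 2 * frobSq (hess u x + (1 / (n : ℝ)) • (1 : Matrix (Fin n) (Fin n) ℝ))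
      ∧ 0 ≤ lap P x :=
  stmt2_general hU u hu heq P hP
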